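/- Let σ be a balanced skew shape with height a and width b (a connected skew shape whose outward corners all have displacement δ(c) = 0), and let P_σ be the associated poset of boxes. Then the antichain cardinality statistic I ↦ #A(I) is (ab/(a+b))-mesic with respect to the action of rowmotion on J(P_σ): the average of #A(I) over every rowmotion-orbit equals ab/(a+b). -/

import Mathlib

open Finset
open scoped Classical

noncomputable section

/-- A skew Young diagram `λ/ν` (in English notation) with height `a` and width `b`.
Rows are indexed `1,…,a` from top to bottom and columns `1,…,b` from left to right;
row `i` consists of the boxes in columns `ν i + 1, …, λ i` (each row is nonempty).
Box `[i,j]` has its southeast corner at the lattice point `(i,j)`, the point `(0,0)`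
being the northwest corner of the bounding `a × b` rectangle. -/
structure SkewShape where
  a : ℕ
  b : ℕ
  ha : 1 ≤ a
  hb : 1 ≤ b
  lam : ℕ → ℕ
  nu : ℕ → ℕ
  lam_anti : ∀ i j : ℕ, 1 ≤ i → i ≤ j → j ≤ a → lam j ≤ lam i
  nu_anti : ∀ i j : ℕ, 1 ≤ i → i ≤ j → j ≤ a → nu j ≤ nu i
  nu_lt_lam : ∀ i : ℕ, 1 ≤ i → i ≤ a → nu i < lam i
  lam_le_b : ∀ i : ℕ, 1 ≤ i → i ≤ a → lam i ≤ b
  lam_one : lam 1 = b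
  nu_a : nu a = 0

namespace SkewShape

variable (σ : SkewShape)

/-- The boxes of `σ` : pairs `[i,j]` with `1 ≤ i ≤ a` and `ν i < j ≤ λ i`.
The poset `P_σ` is the set of boxes ordered componentwise:
`[i,j] ≤ [k,l]` iff `i ≤ k` and `j ≤ l` (the product order on `ℕ × ℕ`). -/
def cells : Finset (ℕ × ℕ) :=
  (Finset.Icc 1 σ.a ×ˢ Finset.Icc 1 σ.b).filter
    (fun c => σ.nu c.1 < c.2 ∧ c.2 ≤ σ.lam c.1)

/-- The poset `P_σ` of boxes of `σ` is connected: it is nonempty, and any two boxes are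
joined by a walk along comparable pairs of boxes. -/
def Connected : Prop :=
  σ.cells.Nonempty ∧ ∀ p ∈ σ.cells, ∀ q ∈ σ.cells,
    Relation.ReflTransGen
      (fun x y : ℕ × ℕ => x ∈ σ.cells ∧ y ∈ σ.cells ∧ (x ≤ y ∨ y ≤ x)) p q

/-- `I` is an order ideal of `P_σ`, i.e. a subshape of `σ`. -/
def IsIdeal (I : Finset (ℕ × ℕ)) : Prop :=
  I ⊆ σ.cells ∧ ∀ p ∈ I, ∀ q ∈ σ.cells, q ≤ p → q ∈ I

/-- The set `J(σ)` of all order ideals of `P_σ` (equivalently, subshapes of `σ`). -/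
def idealsFinset : Finset (Finset (ℕ × ℕ)) :=
  σ.cells.powerset.filter fun I => σ.IsIdeal I

/-- Box `p` can be toggled in to the order ideal `I`. -/
def CanToggleIn (I : Finset (ℕ × ℕ)) (p : ℕ × ℕ) : Prop :=
  p ∈ σ.cells ∧ p ∉ I ∧ σ.IsIdeal (insert p I)

/-- Box `p` can be toggled out of the order ideal `I`. -/
def CanToggleOut (I : Finset (ℕ × ℕ)) (p : ℕ × ℕ) : Prop :=
  p ∈ I ∧ σ.IsIdeal (I.erase p)

/-- The jaggedness of `I`: the number of boxes that can be toggled in,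
plus the number of boxes that can be toggled out. -/
def jag (I : Finset (ℕ × ℕ)) : ℕ :=
  (σ.cells.filter fun p => σ.CanToggleIn I p).card +
  (σ.cells.filter fun p => σ.CanToggleOut I p).card

/-- The probability, under `μ`, that a random order ideal of `P_σ` satisfies `E`. -/
def pr (μ : Finset (ℕ × ℕ) → ℝ) (E : Finset (ℕ × ℕ) → Prop) : ℝ :=
  ∑ I ∈ σ.idealsFinset.filter E, μ I

/-- `μ` is a probability distribution on `J(σ)`. -/
def IsProbDist (μ : Finset (ℕ × ℕ) → ℝ) : Prop :=
  (∀ I, 0 ≤ μ I) ∧ (∑ I ∈ σ.idealsFinset, μ I = 1)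

/-- `μ` is toggle-symmetric: for every box `p` of `σ`, the probability that `p` can be
toggled in equals the probability that `p` can be toggled out. -/
def ToggleSymmetric (μ : Finset (ℕ × ℕ) → ℝ) : Prop :=
  ∀ p ∈ σ.cells,
    σ.pr μ (fun I => σ.CanToggleIn I p) = σ.pr μ (fun I => σ.CanToggleOut I p)

/-- The expectation of the statistic `f` with respect to `μ`. -/
def expect (μ : Finset (ℕ × ℕ) → ℝ) (f : Finset (ℕ × ℕ) → ℝ) : ℝ :=
  ∑ I ∈ σ.idealsFinset, μ I * f I

/-- `c` is a northwest outward corner of `σ`, occurring at the lattice point `c = (i,j)`: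
the northwest boundary of `σ` turns at `(i,j)` with its two steps
(the top edge of box `[i+1,j]` and the left edge of box `[i,j+1]`)
not bordering a common box of `σ`. -/
def IsNWCorner (c : ℕ × ℕ) : Prop :=
  (c.1 + 1, c.2) ∈ σ.cells ∧ (c.1, c.2 + 1) ∈ σ.cells ∧ (c.1, c.2) ∉ σ.cells

/-- `c` is a southeast outward corner of `σ`, occurring at the lattice point `c = (i,j)`:
the southeast boundary of `σ` turns at `(i,j)` with its two steps
(the right edge of box `[i+1,j]` and the bottom edge of box `[i,j+1]`)
not bordering a common box of `σ`. -/
def IsSECorner (c : ℕ × ℕ) : Prop :=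
  (c.1 + 1, c.2) ∈ σ.cells ∧ (c.1, c.2 + 1) ∈ σ.cells ∧ (c.1 + 1, c.2 + 1) ∉ σ.cells

/-- The set of northwest outward corners of `σ`. -/
def nwCorners : Finset (ℕ × ℕ) :=
  (Finset.range (σ.a + 1) ×ˢ Finset.range (σ.b + 1)).filter fun c => σ.IsNWCorner c

/-- The set of southeast outward corners of `σ`.
(Together, `nwCorners` and `seCorners` form the set `C(σ)` of outward corners.) -/
def seCorners : Finset (ℕ × ℕ) :=
  (Finset.range (σ.a + 1) ×ˢ Finset.range (σ.b + 1)).filter fun c => σ.IsSECorner c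

/-- The displacement `δ(c) = 1 − i/a − j/b` of a northwest corner occurring at `(i,j)`. -/
def nwDisp (c : ℕ × ℕ) : ℝ := 1 - (c.1 : ℝ) / (σ.a : ℝ) - (c.2 : ℝ) / (σ.b : ℝ)

/-- The displacement `δ(c) = −1 + i/a + j/b` of a southeast corner occurring at `(i,j)`. -/
def seDisp (c : ℕ × ℕ) : ℝ := -1 + (c.1 : ℝ) / (σ.a : ℝ) + (c.2 : ℝ) / (σ.b : ℝ)

/-- The lattice path of the subshape `I` includes both steps of the northwest corner at
`c = (i,j)`: neither box `[i+1,j]` nor box `[i,j+1]` belongs to `I`. -/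
def NWInPath (c : ℕ × ℕ) (I : Finset (ℕ × ℕ)) : Prop :=
  (c.1 + 1, c.2) ∉ I ∧ (c.1, c.2 + 1) ∉ I

/-- The lattice path of the subshape `I` includes both steps of the southeast corner at
`c = (i,j)`: both boxes `[i+1,j]` and `[i,j+1]` belong to `I`. -/
def SEInPath (c : ℕ × ℕ) (I : Finset (ℕ × ℕ)) : Prop :=
  (c.1 + 1, c.2) ∈ I ∧ (c.1, c.2 + 1) ∈ I

/-- The correction term `Σ_{c ∈ C(σ)} δ(c) · P_μ(c)`, where `P_μ(c)` is the
`μ`-probability that the lattice path of a random subshape includes both steps of `c`. -/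
def cornerCorrection (μ : Finset (ℕ × ℕ) → ℝ) : ℝ :=
  (∑ c ∈ σ.nwCorners, σ.nwDisp c * σ.pr μ (NWInPath c)) +
  (∑ c ∈ σ.seCorners, σ.seDisp c * σ.pr μ (SEInPath c))

end SkewShape

namespace SkewShape

variable (σ : SkewShape)

/-- `σ` is balanced: connected, with every outward corner of displacement `0`
(i.e. occurring on the main anti-diagonal from `(a,0)` to `(0,b)`). -/
def Balanced : Prop :=
  σ.Connected ∧ (∀ c ∈ σ.nwCorners, σ.nwDisp c = 0) ∧ ∀ c ∈ σ.seCorners, σ.seDisp c = 0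

/-- `σ` is abundant: connected, with every outward corner of displacement `≥ 0`. -/
def Abundant : Prop :=
  σ.Connected ∧ (∀ c ∈ σ.nwCorners, 0 ≤ σ.nwDisp c) ∧ ∀ c ∈ σ.seCorners, 0 ≤ σ.seDisp c

/-- `σ` is deficient: connected, with every outward corner of displacement `≤ 0`. -/
def Deficient : Prop :=
  σ.Connected ∧ (∀ c ∈ σ.nwCorners, σ.nwDisp c ≤ 0) ∧ ∀ c ∈ σ.seCorners, σ.seDisp c ≤ 0

end SkewShape

namespace SkewShape

/-- The cardinality of the antichain `A(I)` of maximal elements of `I`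
(with respect to the componentwise order on boxes). -/
def antichainCard (I : Finset (ℕ × ℕ)) : ℕ :=
  (I.filter fun p => ∀ q ∈ I, p ≤ q → q = p).card

end SkewShape

namespace SkewShape

variable (σ : SkewShape)

/-- The toggle `τ_p : J(σ) → J(σ)`: replace `I` by `I Δ {p}` whenever the latter is again
an order ideal of `P_σ`, and do nothing otherwise. -/
def toggle (p : ℕ × ℕ) (I : Finset (ℕ × ℕ)) : Finset (ℕ × ℕ) :=
  if σ.IsIdeal (symmDiff I {p}) then symmDiff I {p} else I

/-- `L` lists the boxes of `σ` in the order `ℓ⁻¹(1), ℓ⁻¹(2), …, ℓ⁻¹(n)` for a linear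
extension `ℓ` of `P_σ`: it enumerates each box exactly once, and no box is preceded by a
strictly larger box. -/
def IsLinExtList (L : List (ℕ × ℕ)) : Prop :=
  L.Nodup ∧ L.toFinset = σ.cells ∧ L.Pairwise fun p q => ¬(q ≤ p ∧ q ≠ p)

/-- Rowmotion with respect to the linear extension `L = [ℓ⁻¹(1),…,ℓ⁻¹(n)]`: the composite
`τ_{ℓ⁻¹(1)} ∘ τ_{ℓ⁻¹(2)} ∘ ⋯ ∘ τ_{ℓ⁻¹(n)}` (toggling from top to bottom). -/
def rowmotion (L : List (ℕ × ℕ)) (I : Finset (ℕ × ℕ)) : Finset (ℕ × ℕ) :=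
  L.foldr σ.toggle I

end SkewShape

/-! Let `weight q` be `ab` times the displacement of the northwest corner of the box `q`; it is an
affine function of `q`. For every order ideal `I` of a balanced shape,
`∑_{q ∈ A(I)} (a + b - weight q) + ∑_{q minimal outside I} weight q = ab`.
Adding a box `p` to `I` changes only the status of `p` and of its four neighbours. Of the two events
"the box above `p` was maximal" and "the box right of `p` becomes minimal outside", exactly one
happens, unless the boundary of `σ` turns at the northeast corner of `p`; that corner then lies on
the anti-diagonal, where the weights make both events irrelevant. The same holds below and to the
left of `p`, so the sum does not change. For `I = ∅` it telescopes along the northwest boundary.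
Rowmotion sends `I` to the order ideal generated by the minimal boxes outside `I`, so these boxes
form `A(row I)`, and the identity becomes `(a + b) #A(I) = ab + weight(A(I)) - weight(A(row I))`,
which telescopes over a rowmotion orbit. -/

lemma Finset.symmDiff_singleton_of_mem {α : Type*} [DecidableEq α] {s : Finset α} {a : α}
    (h : a ∈ s) : symmDiff s {a} = s.erase a := by
  ext b
  by_cases hb : b = a <;> simp_all [mem_symmDiff]

lemma Finset.symmDiff_singleton_of_notMem {α : Type*} [DecidableEq α] {s : Finset α} {a : α}
    (h : a ∉ s) : symmDiff s {a} = insert a s := by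
  ext b
  by_cases hb : b = a <;> simp_all [mem_symmDiff]

lemma Finset.sum_sub_sum_eq_of_mem_iff {α β : Type*} [DecidableEq α] [AddCommGroup β]
    {s t D : Finset α} (h : ∀ x ∉ D, x ∈ s ↔ x ∈ t) (f : α → β) :
    ∑ x ∈ s, f x - ∑ x ∈ t, f x =
      ∑ x ∈ D, ((if x ∈ s then f x else 0) - (if x ∈ t then f x else 0)) := by
  have hout : s.filter (· ∉ D) = t.filter (· ∉ D) := by
    ext x
    simp only [mem_filter]
    exact ⟨fun hx => ⟨(h x hx.2).1 hx.1, hx.2⟩, fun hx => ⟨(h x hx.2).2 hx.1, hx.2⟩⟩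
  rw [sum_sub_distrib, sum_ite_mem, sum_ite_mem, ← sum_filter_add_sum_filter_not s (· ∈ D),
    ← sum_filter_add_sum_filter_not t (· ∈ D), hout, filter_mem_eq_inter, filter_mem_eq_inter,
    inter_comm s, inter_comm t]
  abel

lemma Finset.sum_comp_eq_of_mapsTo_of_injOn {α β : Type*} [AddCommMonoid β] {s : Finset α}
    {f : α → α} (hmaps : Set.MapsTo f s s) (hinj : Set.InjOn f s) (g : α → β) :
    ∑ x ∈ s, g (f x) = ∑ x ∈ s, g x :=
  sum_nbij f hmaps hinj ((s.finite_toSet.injOn_iff_bijOn_of_mapsTo hmaps).1 hinj).surjOn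
    fun _ _ => rfl

namespace SkewShape

/-! ### The shape -/

section Shape

variable (σ : SkewShape)

lemma mem_cells {i j : ℕ} :
    (i, j) ∈ σ.cells ↔ 1 ≤ i ∧ i ≤ σ.a ∧ σ.nu i < j ∧ j ≤ σ.lam i := by
  simp only [cells, mem_filter, mem_product, mem_Icc]
  constructor
  · rintro ⟨⟨hi, -⟩, hj⟩
    exact ⟨hi.1, hi.2, hj⟩
  · rintro ⟨hi₁, hi₂, hj₁, hj₂⟩
    exact ⟨⟨⟨hi₁, hi₂⟩, by omega, hj₂.trans (σ.lam_le_b i hi₁ hi₂)⟩, hj₁, hj₂⟩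

lemma exists_eq_succ_of_mem_cells {p : ℕ × ℕ} (hp : p ∈ σ.cells) :
    ∃ i j, p = (i + 1, j + 1) := by
  obtain ⟨k, l⟩ := p
  rw [mem_cells] at hp
  exact ⟨k - 1, l - 1, by simp only [Prod.mk.injEq]; omega⟩

lemma ordConnected_cells : Set.OrdConnected (σ.cells : Set (ℕ × ℕ)) := by
  refine ⟨fun ⟨x₁, x₂⟩ hx ⟨z₁, z₂⟩ hz ⟨y₁, y₂⟩ ⟨hxy, hyz⟩ => ?_⟩
  simp only [mem_coe, mem_cells, Prod.mk_le_mk] at hx hz hxy hyz ⊢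
  have := σ.nu_anti x₁ y₁ hx.1 hxy.1 (by omega)
  have := σ.lam_anti y₁ z₁ (by omega) hyz.1 hz.2.1
  omega

lemma mem_cells_of_le_of_le {x y z : ℕ × ℕ} (hx : x ∈ σ.cells) (hz : z ∈ σ.cells)
    (hxy : x ≤ y) (hyz : y ≤ z) : y ∈ σ.cells :=
  σ.ordConnected_cells.out hx hz ⟨hxy, hyz⟩

variable {σ}

lemma Connected.nu_lt_lam_succ (hσ : σ.Connected) {i : ℕ} (hi : 1 ≤ i) (hia : i < σ.a) :
    σ.nu i < σ.lam (i + 1) := by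
  by_contra! hgap
  have hp : (i, σ.nu i + 1) ∈ σ.cells :=
    σ.mem_cells.2 ⟨hi, hia.le, by omega, σ.nu_lt_lam i hi hia.le⟩
  have hq : (i + 1, σ.nu (i + 1) + 1) ∈ σ.cells :=
    σ.mem_cells.2 ⟨by omega, hia, by omega, σ.nu_lt_lam (i + 1) (by omega) hia⟩
  -- no comparable pair of boxes crosses from rows `≤ i` to rows `> i`
  suffices ∀ q, Relation.ReflTransGen
      (fun x y : ℕ × ℕ => x ∈ σ.cells ∧ y ∈ σ.cells ∧ (x ≤ y ∨ y ≤ x)) (i, σ.nu i + 1) q →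
      q.1 ≤ i by
    have := this _ (hσ.2 _ hp _ hq)
    omega
  intro q hrel
  induction hrel with
  | refl => exact le_rfl
  | @tail x y _ hxy ih =>
    obtain ⟨hx, hy, hcomp⟩ := hxy
    obtain ⟨x₁, x₂⟩ := x
    obtain ⟨y₁, y₂⟩ := y
    rw [mem_cells] at hx hy
    simp only [Prod.mk_le_mk] at hcomp ih ⊢
    by_contra! hy₁
    have := σ.lam_anti (i + 1) y₁ (by omega) hy₁ hy.2.1
    have := σ.nu_anti x₁ i hx.1 ih hia.le
    omega

lemma Connected.eq_top_right (hσ : σ.Connected) {i j : ℕ} (hp : (i + 1, j + 1) ∈ σ.cells)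
    (hup : (i, j + 1) ∉ σ.cells) (hright : (i + 1, j + 2) ∉ σ.cells) : i = 0 ∧ j + 1 = σ.b := by
  rw [mem_cells] at hp hup hright
  rcases Nat.eq_zero_or_pos i with rfl | hi
  · simp only [zero_add] at hp hright
    have := σ.lam_one
    omega
  · have := σ.lam_anti i (i + 1) hi (by omega) hp.2.1
    have := hσ.nu_lt_lam_succ hi (by omega)
    omega

lemma Connected.eq_bottom_left (hσ : σ.Connected) {i j : ℕ} (hp : (i + 1, j + 1) ∈ σ.cells)
    (hleft : (i + 1, j) ∉ σ.cells) (hdown : (i + 2, j + 1) ∉ σ.cells) : i + 1 = σ.a ∧ j = 0 := by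
  rw [mem_cells] at hp hleft hdown
  rcases Nat.lt_or_ge (i + 1) σ.a with hia | hia
  · have := σ.nu_anti (i + 1) (i + 2) (by omega) (by omega) hia
    have : σ.nu (i + 1) < σ.lam (i + 2) := hσ.nu_lt_lam_succ (by omega) hia
    omega
  · have := σ.nu_a
    rw [← show i + 1 = σ.a by omega] at this
    omega

lemma mul_add_mul_eq_of_nwDisp_eq_zero {c : ℕ × ℕ} (h : σ.nwDisp c = 0) :
    σ.b * c.1 + σ.a * c.2 = σ.a * σ.b := by
  have ha : (σ.a : ℝ) ≠ 0 := by have := σ.ha; positivity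
  have hb : (σ.b : ℝ) ≠ 0 := by have := σ.hb; positivity
  unfold nwDisp at h
  field_simp at h
  exact_mod_cast (by linarith : (σ.b : ℝ) * c.1 + σ.a * c.2 = σ.a * σ.b)

lemma mem_range_prod_of_mem_cells {i j : ℕ} (h₁ : (i + 1, j) ∈ σ.cells)
    (h₂ : (i, j + 1) ∈ σ.cells) : (i, j) ∈ range (σ.a + 1) ×ˢ range (σ.b + 1) := by
  have := (σ.mem_cells.1 h₁).2.1
  have := (mem_filter.1 h₂).1
  simp only [mem_product, mem_Icc, mem_range] at *
  omega

lemma Balanced.mul_add_mul_eq_of_isNWCorner (hbal : σ.Balanced) {i j : ℕ}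
    (hc : σ.IsNWCorner (i, j)) : σ.b * i + σ.a * j = σ.a * σ.b :=
  mul_add_mul_eq_of_nwDisp_eq_zero (c := (i, j)) <| hbal.2.1 _ <|
    mem_filter.2 ⟨mem_range_prod_of_mem_cells hc.1 hc.2.1, hc⟩

lemma Balanced.mul_add_mul_eq_of_isSECorner (hbal : σ.Balanced) {i j : ℕ}
    (hc : σ.IsSECorner (i, j)) : σ.b * i + σ.a * j = σ.a * σ.b := by
  refine mul_add_mul_eq_of_nwDisp_eq_zero (c := (i, j)) ?_
  have := hbal.2.2 _ (mem_filter.2 ⟨mem_range_prod_of_mem_cells hc.1 hc.2.1, hc⟩)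
  simp only [seDisp, nwDisp] at this ⊢
  linarith

end Shape

/-! ### Maximal boxes of an ideal and minimal boxes outside it -/

section Ideals

def maxElems (I : Finset (ℕ × ℕ)) : Finset (ℕ × ℕ) :=
  I.filter fun p => ∀ q ∈ I, p ≤ q → q = p

def minOutside (σ : SkewShape) (I : Finset (ℕ × ℕ)) : Finset (ℕ × ℕ) :=
  σ.cells.filter fun p => p ∉ I ∧ ∀ q ∈ σ.cells, q < p → q ∈ I

variable {σ : SkewShape} {I J : Finset (ℕ × ℕ)} {p : ℕ × ℕ}

lemma isIdeal_empty : σ.IsIdeal ∅ := ⟨empty_subset _, by simp⟩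

lemma IsIdeal.not_le_of_notMem (hJ : σ.IsIdeal J) {q : ℕ × ℕ} (hp : p ∈ σ.cells)
    (hpJ : p ∉ J) (hq : q ∈ J) : ¬p ≤ q :=
  fun hpq => hpJ (hJ.2 q hq p hp hpq)

lemma IsIdeal.mem_of_le_of_le (hJ : σ.IsIdeal J) {x y z : ℕ × ℕ} (hx : x ∈ σ.cells)
    (hz : z ∈ J) (hxy : x ≤ y) (hyz : y ≤ z) : y ∈ J :=
  hJ.2 z hz y (σ.mem_cells_of_le_of_le hx (hJ.1 hz) hxy hyz) hyz

lemma IsIdeal.insert (hJ : σ.IsIdeal J) (hp : p ∈ σ.minOutside J) :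
    σ.IsIdeal (insert p J) := by
  obtain ⟨hpc, -, hbelow⟩ := mem_filter.1 hp
  refine ⟨insert_subset hpc hJ.1, fun x hx q hq hqx => ?_⟩
  rcases mem_insert.1 hx with rfl | hx
  · rcases hqx.lt_or_eq with hlt | rfl
    · exact mem_insert_of_mem (hbelow q hq hlt)
    · exact mem_insert_self _ _
  · exact mem_insert_of_mem (hJ.2 x hx q hq hqx)

lemma IsIdeal.erase (hJ : σ.IsIdeal J) (hp : p ∈ maxElems J) : σ.IsIdeal (J.erase p) := by
  obtain ⟨-, habove⟩ := mem_filter.1 hp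
  refine ⟨(erase_subset p J).trans hJ.1, fun x hx q hq hqx => mem_erase.2 ⟨?_, ?_⟩⟩
  · rintro rfl
    exact (mem_erase.1 hx).1 (habove x (mem_of_mem_erase hx) hqx)
  · exact hJ.2 x (mem_of_mem_erase hx) q hq hqx

lemma isIdeal_erase_iff (hJ : σ.IsIdeal J) (hp : p ∈ J) :
    σ.IsIdeal (J.erase p) ↔ p ∈ maxElems J := by
  refine ⟨fun hid => mem_filter.2 ⟨hp, fun q hq hpq => ?_⟩, hJ.erase⟩
  by_contra hqp
  exact notMem_erase p J (hid.2 q (mem_erase.2 ⟨hqp, hq⟩) p (hJ.1 hp) hpq)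

lemma isIdeal_insert_iff (hJ : σ.IsIdeal J) (hp : p ∉ J) :
    σ.IsIdeal (insert p J) ↔ p ∈ σ.minOutside J := by
  refine ⟨fun hid => mem_filter.2 ⟨hid.1 (mem_insert_self p J), hp, fun q hq hqp => ?_⟩,
    hJ.insert⟩
  exact (mem_insert.1 (hid.2 p (mem_insert_self p J) q hq hqp.le)).resolve_left hqp.ne

lemma mem_minOutside_erase (hJ : σ.IsIdeal J) (hp : p ∈ maxElems J) :
    p ∈ σ.minOutside (J.erase p) := by
  obtain ⟨hpJ, -⟩ := mem_filter.1 hp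
  refine mem_filter.2 ⟨hJ.1 hpJ, notMem_erase p J, fun q hq hqp => ?_⟩
  exact mem_erase.2 ⟨hqp.ne, hJ.2 p hpJ q hq hqp.le⟩

lemma eq_of_le_of_mem_minOutside {m m' : ℕ × ℕ} (hm : m ∈ σ.minOutside I)
    (hm' : m' ∈ σ.minOutside I) (hle : m ≤ m') : m = m' := by
  by_contra hne
  exact (mem_filter.1 hm).2.1
    ((mem_filter.1 hm').2.2 m (mem_filter.1 hm).1 (lt_of_le_of_ne hle hne))

lemma IsIdeal.mem_maxElems_iff (hJ : σ.IsIdeal J) {i j : ℕ} :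
    (i, j) ∈ maxElems J ↔ (i, j) ∈ J ∧ (i + 1, j) ∉ J ∧ (i, j + 1) ∉ J := by
  simp only [maxElems, mem_filter]
  constructor
  · rintro ⟨hq, hmax⟩
    refine ⟨hq, fun h => ?_, fun h => ?_⟩ <;> simpa using hmax _ h (by simp [Prod.mk_le_mk])
  · rintro ⟨hq, hdown, hright⟩
    refine ⟨hq, fun ⟨y₁, y₂⟩ hy hle => ?_⟩
    by_contra hne
    have hqc := hJ.1 hq
    rcases (show (i + 1, j) ≤ (y₁, y₂) ∨ (i, j + 1) ≤ (y₁, y₂) by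
      simp only [Prod.mk_le_mk, Prod.mk.injEq] at hle hne ⊢; omega) with h | h
    · exact hdown (hJ.mem_of_le_of_le hqc hy (by simp [Prod.mk_le_mk]) h)
    · exact hright (hJ.mem_of_le_of_le hqc hy (by simp [Prod.mk_le_mk]) h)

lemma IsIdeal.mem_minOutside_iff (hJ : σ.IsIdeal J) {i j : ℕ} :
    (i + 1, j + 1) ∈ σ.minOutside J ↔ (i + 1, j + 1) ∈ σ.cells ∧ (i + 1, j + 1) ∉ J ∧
      ((i, j + 1) ∈ σ.cells → (i, j + 1) ∈ J) ∧ ((i + 1, j) ∈ σ.cells → (i + 1, j) ∈ J) := by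
  simp only [minOutside, mem_filter]
  constructor
  · rintro ⟨hp, hpJ, hbelow⟩
    exact ⟨hp, hpJ, fun h => hbelow _ h (by simp [Prod.lt_iff]),
      fun h => hbelow _ h (by simp [Prod.lt_iff])⟩
  · rintro ⟨hp, hpJ, hup, hleft⟩
    refine ⟨hp, hpJ, fun ⟨y₁, y₂⟩ hy hlt => ?_⟩
    rcases (show (y₁, y₂) ≤ (i, j + 1) ∨ (y₁, y₂) ≤ (i + 1, j) by
      simp only [Prod.lt_iff, Prod.mk_le_mk] at hlt ⊢; omega) with h | h
    · exact hJ.2 _ (hup (σ.mem_cells_of_le_of_le hy hp h (by simp [Prod.mk_le_mk]))) _ hy h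
    · exact hJ.2 _ (hleft (σ.mem_cells_of_le_of_le hy hp h (by simp [Prod.mk_le_mk]))) _ hy h

end Ideals

/-! ### Toggles and rowmotion -/

section Rowmotion

variable {σ : SkewShape} {I J : Finset (ℕ × ℕ)} {p q : ℕ × ℕ} {L : List (ℕ × ℕ)}

lemma self_mem_toggle_iff_of_mem (hJ : σ.IsIdeal J) (hp : p ∈ J) :
    p ∈ σ.toggle p J ↔ p ∉ maxElems J := by
  rw [toggle, symmDiff_singleton_of_mem hp]
  simp only [isIdeal_erase_iff hJ hp]
  split_ifs with h <;> simp [h, hp]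

lemma self_mem_toggle_iff_of_notMem (hJ : σ.IsIdeal J) (hp : p ∉ J) :
    p ∈ σ.toggle p J ↔ p ∈ σ.minOutside J := by
  rw [toggle, symmDiff_singleton_of_notMem hp]
  simp only [isIdeal_insert_iff hJ hp]
  split_ifs with h <;> simp [h, hp]

lemma mem_toggle_of_ne (h : q ≠ p) : q ∈ σ.toggle p I ↔ q ∈ I := by
  unfold toggle
  split_ifs <;> simp [mem_symmDiff, h]

lemma isIdeal_toggle (hI : σ.IsIdeal I) : σ.IsIdeal (σ.toggle p I) := by
  unfold toggle
  split_ifs with h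
  exacts [h, hI]

lemma toggle_toggle (hI : σ.IsIdeal I) : σ.toggle p (σ.toggle p I) = I := by
  unfold toggle
  by_cases h : σ.IsIdeal (symmDiff I {p})
  · rw [if_pos h, symmDiff_symmDiff_cancel_right, if_pos hI]
  · rw [if_neg h, if_neg h]

lemma isIdeal_rowmotion (L : List (ℕ × ℕ)) (hI : σ.IsIdeal I) :
    σ.IsIdeal (σ.rowmotion L I) := by
  induction L with
  | nil => exact hI
  | cons x L ih => exact isIdeal_toggle ih

lemma injOn_rowmotion (L : List (ℕ × ℕ)) :
    Set.InjOn (σ.rowmotion L) {I | σ.IsIdeal I} := by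
  induction L with
  | nil => exact Set.injOn_id _
  | cons x L ih =>
    intro I hI J hJ h
    refine ih hI hJ ?_
    rw [← toggle_toggle (p := x) (isIdeal_rowmotion L hI),
      ← toggle_toggle (p := x) (isIdeal_rowmotion L hJ)]
    exact congrArg (σ.toggle x) h

/-- The toggle of `q` in rowmotion, when the boxes above `q` have already been toggled. -/
lemma self_mem_toggle_iff_of_mem_iff {M : List (ℕ × ℕ)} (hJ : σ.IsIdeal J)
    (hJM : ∀ r, r ∈ J ↔ if r ∈ M then ∃ m ∈ σ.minOutside I, r ≤ m else r ∈ I)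
    (hq : q ∈ σ.cells) (hqM : q ∉ M) (habove : ∀ y ∈ σ.cells, q ≤ y → y ≠ q → y ∈ M)
    (hbelow : ∀ y < q, y ∉ M) :
    q ∈ σ.toggle q J ↔ ∃ m ∈ σ.minOutside I, q ≤ m := by
  have hJI : ∀ r ∉ M, r ∈ J ↔ r ∈ I := fun r hr => by rw [hJM, if_neg hr]
  by_cases hqI : q ∈ I
  · have hqJ := (hJI q hqM).2 hqI
    rw [self_mem_toggle_iff_of_mem hJ hqJ]
    constructor
    · intro hmax
      obtain ⟨y, hyJ, hqy, hyq⟩ : ∃ y ∈ J, q ≤ y ∧ y ≠ q := by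
        simpa [maxElems, mem_filter, hqJ] using hmax
      have hy := (hJM y).1 hyJ
      rw [if_pos (habove y (hJ.1 hyJ) hqy hyq)] at hy
      obtain ⟨m, hm, hym⟩ := hy
      exact ⟨m, hm, hqy.trans hym⟩
    · rintro ⟨m, hm, hqm⟩ hmax
      have hmq : m ≠ q := fun h => (mem_filter.1 hm).2.1 (h ▸ hqI)
      have hmJ : m ∈ J := by
        rw [hJM, if_pos (habove m (mem_filter.1 hm).1 hqm hmq)]
        exact ⟨m, hm, le_rfl⟩
      exact hmq ((mem_filter.1 hmax).2 m hmJ hqm)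
  · have hqJ : q ∉ J := fun h => hqI ((hJI q hqM).1 h)
    rw [self_mem_toggle_iff_of_notMem hJ hqJ]
    trans q ∈ σ.minOutside I
    · simp only [minOutside, mem_filter, hqJ, hqI, not_false_eq_true, true_and]
      exact and_congr_right fun _ => forall₂_congr fun r _ => imp_congr_right fun hrq =>
        hJI r (hbelow r hrq)
    · refine ⟨fun hq => ⟨q, hq, le_rfl⟩, fun ⟨m, hm, hqm⟩ => ?_⟩
      rcases hqm.lt_or_eq with hlt | rfl
      · exact absurd ((mem_filter.1 hm).2.2 q hq hlt) hqI
      · exact hm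

lemma mem_foldr_toggle_iff {M : List (ℕ × ℕ)} (hnodup : M.Nodup)
    (hsorted : M.Pairwise fun p q => ¬(q ≤ p ∧ q ≠ p)) (hcells : ∀ x ∈ M, x ∈ σ.cells)
    (hup : ∀ x ∈ M, ∀ y ∈ σ.cells, x ≤ y → y ∈ M) (hI : σ.IsIdeal I) (q : ℕ × ℕ) :
    q ∈ M.foldr σ.toggle I ↔ if q ∈ M then ∃ m ∈ σ.minOutside I, q ≤ m else q ∈ I := by
  induction M generalizing q with
  | nil => simp
  | cons x M ih =>
    obtain ⟨hxM, hnodup⟩ := List.nodup_cons.1 hnodup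
    obtain ⟨hxmin, hsorted⟩ := List.pairwise_cons.1 hsorted
    have habove : ∀ y ∈ σ.cells, x ≤ y → y ≠ x → y ∈ M := fun y hy hxy hyx =>
      (List.mem_cons.1 (hup x List.mem_cons_self y hy hxy)).resolve_left hyx
    have hupM : ∀ z ∈ M, ∀ y ∈ σ.cells, z ≤ y → y ∈ M := fun z hz y hy hzy =>
      (List.mem_cons.1 (hup z (List.mem_cons_of_mem x hz) y hy hzy)).resolve_left
        fun hyx => hxmin z hz ⟨hyx ▸ hzy, fun hzx => hxM (hzx ▸ hz)⟩
    have ih := ih hnodup hsorted (fun z hz => hcells z (List.mem_cons_of_mem x hz)) hupM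
    rw [List.foldr_cons]
    by_cases hqx : q = x
    · subst hqx
      rw [if_pos List.mem_cons_self]
      exact self_mem_toggle_iff_of_mem_iff (isIdeal_rowmotion M hI) ih
        (hcells q List.mem_cons_self) hxM habove fun y hyq hyM => hxmin y hyM ⟨hyq.le, hyq.ne⟩
    · simp only [mem_toggle_of_ne hqx, List.mem_cons, hqx, false_or]
      exact ih q

lemma mem_rowmotion_iff (hL : σ.IsLinExtList L) (hI : σ.IsIdeal I) (hq : q ∈ σ.cells) :
    q ∈ σ.rowmotion L I ↔ ∃ m ∈ σ.minOutside I, q ≤ m := by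
  obtain ⟨hnodup, hcells, hsorted⟩ := hL
  have hmemL : ∀ x, x ∈ L ↔ x ∈ σ.cells := fun x => by rw [← hcells, List.mem_toFinset]
  rw [rowmotion, mem_foldr_toggle_iff hnodup hsorted (fun x => (hmemL x).1)
    (fun _ _ y hy _ => (hmemL y).2 hy) hI, if_pos ((hmemL q).2 hq)]

lemma maxElems_rowmotion (hL : σ.IsLinExtList L) (hI : σ.IsIdeal I) :
    maxElems (σ.rowmotion L I) = σ.minOutside I := by
  have hR := isIdeal_rowmotion L hI
  ext q
  simp only [maxElems, mem_filter]
  constructor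
  · rintro ⟨hqR, hmax⟩
    obtain ⟨m, hm, hqm⟩ := (mem_rowmotion_iff hL hI (hR.1 hqR)).1 hqR
    have hmR := (mem_rowmotion_iff hL hI (mem_filter.1 hm).1).2 ⟨m, hm, le_rfl⟩
    rwa [← hmax m hmR hqm]
  · intro hq
    refine ⟨(mem_rowmotion_iff hL hI (mem_filter.1 hq).1).2 ⟨q, hq, le_rfl⟩,
      fun y hyR hqy => ?_⟩
    obtain ⟨m, hm, hym⟩ := (mem_rowmotion_iff hL hI (hR.1 hyR)).1 hyR
    obtain rfl := eq_of_le_of_mem_minOutside hq hm (hqy.trans hym)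
    exact le_antisymm hym hqy

end Rowmotion

/-! ### A quantity preserved by adding boxes -/

section WeightedJag

variable (σ : SkewShape)

/-- `a * b` times the displacement `1 - i/a - j/b` of the northwest corner `(i, j)` of box `q`. -/
def weight (q : ℕ × ℕ) : ℤ := σ.a * σ.b + σ.a + σ.b - σ.b * q.1 - σ.a * q.2

def weightedJag (I : Finset (ℕ × ℕ)) : ℤ :=
  ∑ q ∈ maxElems I, (σ.a + σ.b - σ.weight q) + ∑ q ∈ σ.minOutside I, σ.weight q

lemma weight_succ_fst (i j : ℕ) : σ.weight (i + 1, j) = σ.weight (i, j) - σ.b := by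
  simp only [weight]; push_cast; ring

lemma weight_succ_snd (i j : ℕ) : σ.weight (i, j + 1) = σ.weight (i, j) - σ.a := by
  simp only [weight]; push_cast; ring

variable {σ} {J : Finset (ℕ × ℕ)} {i j : ℕ}

lemma Balanced.xor_up_max_right_min (hbal : σ.Balanced) (hJ : σ.IsIdeal J)
    (hp : (i + 1, j + 1) ∈ σ.minOutside J) :
    Xor ((i, j + 1) ∈ maxElems J) ((i + 1, j + 2) ∈ σ.minOutside (insert (i + 1, j + 1) J)) ∨
      σ.b * i + σ.a * (j + 1) = σ.a * σ.b := by
  obtain ⟨hpc, hpJ, hpup, -⟩ := hJ.mem_minOutside_iff.1 hp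
  have hA : (i, j + 1) ∈ maxElems J ↔ (i, j + 1) ∈ σ.cells ∧ (i, j + 2) ∉ J := by
    rw [hJ.mem_maxElems_iff]
    exact ⟨fun h => ⟨hJ.1 h.1, h.2.2⟩, fun h => ⟨hpup h.1, hpJ, h.2⟩⟩
  have hB : (i + 1, j + 2) ∈ σ.minOutside (insert (i + 1, j + 1) J) ↔
      (i + 1, j + 2) ∈ σ.cells ∧ ((i, j + 2) ∈ σ.cells → (i, j + 2) ∈ J) := by
    have hvJ : (i + 1, j + 2) ∉ J := fun h =>
      hJ.not_le_of_notMem hpc hpJ h (by simp [Prod.mk_le_mk])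
    rw [(hJ.insert hp).mem_minOutside_iff (j := j + 1)]
    simp [hvJ]
  by_cases hd : (i, j + 2) ∈ J
  · by_cases hv : (i + 1, j + 2) ∈ σ.cells
    · exact Or.inl (Or.inr ⟨hB.2 ⟨hv, fun _ => hd⟩, fun h => (hA.1 h).2 hd⟩)
    · exact Or.inr (hbal.mul_add_mul_eq_of_isSECorner ⟨hpc, hJ.1 hd, hv⟩)
  by_cases hdc : (i, j + 2) ∈ σ.cells
  · by_cases hu : (i, j + 1) ∈ σ.cells
    · exact Or.inl (Or.inl ⟨hA.2 ⟨hu, hd⟩, fun h => hd ((hB.1 h).2 hdc)⟩)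
    · exact Or.inr (hbal.mul_add_mul_eq_of_isNWCorner ⟨hpc, hdc, hu⟩)
  by_cases hu : (i, j + 1) ∈ σ.cells <;> by_cases hv : (i + 1, j + 2) ∈ σ.cells
  · exact absurd (σ.mem_cells_of_le_of_le hu hv (by simp [Prod.mk_le_mk])
      (by simp [Prod.mk_le_mk])) hdc
  · exact Or.inl (Or.inl ⟨hA.2 ⟨hu, hd⟩, fun h => hv (hB.1 h).1⟩)
  · exact Or.inl (Or.inr ⟨hB.2 ⟨hv, fun h => absurd h hdc⟩, fun h => hu (hA.1 h).1⟩)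
  · obtain ⟨rfl, hjb⟩ := hbal.1.eq_top_right hpc hu hv
    exact Or.inr (by rw [← hjb]; ring)

lemma Balanced.xor_left_max_down_min (hbal : σ.Balanced) (hJ : σ.IsIdeal J)
    (hp : (i + 1, j + 1) ∈ σ.minOutside J) :
    Xor ((i + 1, j) ∈ maxElems J) ((i + 2, j + 1) ∈ σ.minOutside (insert (i + 1, j + 1) J)) ∨
      σ.b * (i + 1) + σ.a * j = σ.a * σ.b := by
  obtain ⟨hpc, hpJ, -, hpleft⟩ := hJ.mem_minOutside_iff.1 hp
  have hA : (i + 1, j) ∈ maxElems J ↔ (i + 1, j) ∈ σ.cells ∧ (i + 2, j) ∉ J := by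
    rw [hJ.mem_maxElems_iff]
    exact ⟨fun h => ⟨hJ.1 h.1, h.2.1⟩, fun h => ⟨hpleft h.1, h.2, hpJ⟩⟩
  have hB : (i + 2, j + 1) ∈ σ.minOutside (insert (i + 1, j + 1) J) ↔
      (i + 2, j + 1) ∈ σ.cells ∧ ((i + 2, j) ∈ σ.cells → (i + 2, j) ∈ J) := by
    have hvJ : (i + 2, j + 1) ∉ J := fun h =>
      hJ.not_le_of_notMem hpc hpJ h (by simp [Prod.mk_le_mk])
    rw [(hJ.insert hp).mem_minOutside_iff (i := i + 1)]
    simp [hvJ]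
  by_cases hd : (i + 2, j) ∈ J
  · by_cases hv : (i + 2, j + 1) ∈ σ.cells
    · exact Or.inl (Or.inr ⟨hB.2 ⟨hv, fun _ => hd⟩, fun h => (hA.1 h).2 hd⟩)
    · exact Or.inr (hbal.mul_add_mul_eq_of_isSECorner ⟨hJ.1 hd, hpc, hv⟩)
  by_cases hdc : (i + 2, j) ∈ σ.cells
  · by_cases hu : (i + 1, j) ∈ σ.cells
    · exact Or.inl (Or.inl ⟨hA.2 ⟨hu, hd⟩, fun h => hd ((hB.1 h).2 hdc)⟩)
    · exact Or.inr (hbal.mul_add_mul_eq_of_isNWCorner ⟨hdc, hpc, hu⟩)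
  by_cases hu : (i + 1, j) ∈ σ.cells <;> by_cases hv : (i + 2, j + 1) ∈ σ.cells
  · exact absurd (σ.mem_cells_of_le_of_le hu hv (by simp [Prod.mk_le_mk])
      (by simp [Prod.mk_le_mk])) hdc
  · exact Or.inl (Or.inl ⟨hA.2 ⟨hu, hd⟩, fun h => hv (hB.1 h).1⟩)
  · exact Or.inl (Or.inr ⟨hB.2 ⟨hv, fun h => absurd h hdc⟩, fun h => hu (hA.1 h).1⟩)
  · obtain ⟨hia, rfl⟩ := hbal.1.eq_bottom_left hpc hu hv
    exact Or.inr (by rw [← hia]; ring)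

lemma Balanced.up_right_contribution (hbal : σ.Balanced) (hJ : σ.IsIdeal J)
    (hp : (i + 1, j + 1) ∈ σ.minOutside J) :
    (if (i + 1, j + 2) ∈ σ.minOutside (insert (i + 1, j + 1) J) then σ.weight (i + 1, j + 2)
      else 0) - (if (i, j + 1) ∈ maxElems J then σ.a + σ.b - σ.weight (i, j + 1) else 0) =
      σ.weight (i + 1, j + 1) - σ.a := by
  have hup : σ.weight (i + 1, j + 1) = σ.weight (i, j + 1) - σ.b := σ.weight_succ_fst i (j + 1)
  have hright : σ.weight (i + 1, j + 2) = σ.weight (i + 1, j + 1) - σ.a :=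
    σ.weight_succ_snd (i + 1) (j + 1)
  rcases hbal.xor_up_max_right_min hJ hp with (⟨hA, hB⟩ | ⟨hB, hA⟩) | hdiag
  · simp only [hA, hB, if_true, if_false]
    linarith
  · simp only [hA, hB, if_true, if_false]
    linarith
  · have hdiag : (σ.b : ℤ) * i + σ.a * (j + 1) = σ.a * σ.b := by exact_mod_cast hdiag
    have hw : σ.weight (i + 1, j + 1) = σ.a := by
      simp only [weight]
      push_cast
      linear_combination -hdiag
    split_ifs <;> linarith

lemma Balanced.left_down_contribution (hbal : σ.Balanced) (hJ : σ.IsIdeal J)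
    (hp : (i + 1, j + 1) ∈ σ.minOutside J) :
    (if (i + 2, j + 1) ∈ σ.minOutside (insert (i + 1, j + 1) J) then σ.weight (i + 2, j + 1)
      else 0) - (if (i + 1, j) ∈ maxElems J then σ.a + σ.b - σ.weight (i + 1, j) else 0) =
      σ.weight (i + 1, j + 1) - σ.b := by
  have hleft : σ.weight (i + 1, j + 1) = σ.weight (i + 1, j) - σ.a := σ.weight_succ_snd (i + 1) j
  have hdown : σ.weight (i + 2, j + 1) = σ.weight (i + 1, j + 1) - σ.b :=
    σ.weight_succ_fst (i + 1) (j + 1)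
  rcases hbal.xor_left_max_down_min hJ hp with (⟨hA, hB⟩ | ⟨hB, hA⟩) | hdiag
  · simp only [hA, hB, if_true, if_false]
    linarith
  · simp only [hA, hB, if_true, if_false]
    linarith
  · have hdiag : (σ.b : ℤ) * (i + 1) + σ.a * j = σ.a * σ.b := by exact_mod_cast hdiag
    have hw : σ.weight (i + 1, j + 1) = σ.b := by
      simp only [weight]
      push_cast
      linear_combination -hdiag
    split_ifs <;> linarith

lemma mem_maxElems_insert_iff (hJ : σ.IsIdeal J) (hp : (i + 1, j + 1) ∈ σ.minOutside J)
    {x : ℕ × ℕ} (hx : x ∉ ({(i + 1, j + 1), (i, j + 1), (i + 1, j)} : Finset (ℕ × ℕ))) :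
    x ∈ maxElems (insert (i + 1, j + 1) J) ↔ x ∈ maxElems J := by
  obtain ⟨x₁, x₂⟩ := x
  simp only [mem_insert, mem_singleton, Prod.mk.injEq, not_or, not_and] at hx
  have h₁ : ¬(x₁ = i + 1 ∧ x₂ = j + 1) := by omega
  have h₂ : ¬(x₁ + 1 = i + 1 ∧ x₂ = j + 1) := by omega
  have h₃ : ¬(x₁ = i + 1 ∧ x₂ + 1 = j + 1) := by omega
  rw [(hJ.insert hp).mem_maxElems_iff, hJ.mem_maxElems_iff]
  simp only [mem_insert, Prod.mk.injEq, h₁, h₂, h₃, false_or]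

lemma mem_minOutside_insert_iff (hJ : σ.IsIdeal J) (hp : (i + 1, j + 1) ∈ σ.minOutside J)
    {x : ℕ × ℕ} (hx : x ∉ ({(i + 1, j + 1), (i + 1, j + 2), (i + 2, j + 1)} : Finset (ℕ × ℕ))) :
    x ∈ σ.minOutside (insert (i + 1, j + 1) J) ↔ x ∈ σ.minOutside J := by
  by_cases hxc : x ∈ σ.cells
  swap
  · exact iff_of_false (fun h => hxc (mem_filter.1 h).1) (fun h => hxc (mem_filter.1 h).1)
  obtain ⟨k, l, rfl⟩ := σ.exists_eq_succ_of_mem_cells hxc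
  simp only [mem_insert, mem_singleton, Prod.mk.injEq, not_or, not_and] at hx
  have h₁ : ¬(k + 1 = i + 1 ∧ l + 1 = j + 1) := by omega
  have h₂ : ¬(k = i + 1 ∧ l + 1 = j + 1) := by omega
  have h₃ : ¬(k + 1 = i + 1 ∧ l = j + 1) := by omega
  rw [(hJ.insert hp).mem_minOutside_iff, hJ.mem_minOutside_iff]
  simp only [mem_insert, Prod.mk.injEq, h₁, h₂, h₃, false_or]

lemma Balanced.weightedJag_insert (hbal : σ.Balanced) (hJ : σ.IsIdeal J)
    (hp : (i + 1, j + 1) ∈ σ.minOutside J) :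
    σ.weightedJag (insert (i + 1, j + 1) J) = σ.weightedJag J := by
  have hJ' := hJ.insert hp
  obtain ⟨hpc, hpJ, -, -⟩ := hJ.mem_minOutside_iff.1 hp
  have hmax := sum_sub_sum_eq_of_mem_iff (fun _ => mem_maxElems_insert_iff hJ hp)
    fun q => (σ.a + σ.b - σ.weight q : ℤ)
  have hmin := sum_sub_sum_eq_of_mem_iff (fun _ => mem_minOutside_insert_iff hJ hp) σ.weight
  rw [sum_insert (by simp), sum_insert (by simp), sum_singleton] at hmax hmin
  have hp_max : (i + 1, j + 1) ∈ maxElems (insert (i + 1, j + 1) J) := by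
    rw [hJ'.mem_maxElems_iff]
    have hnotJ : ∀ x, (i + 1, j + 1) ≤ x → x ∉ J := fun x hx hxJ =>
      hJ.not_le_of_notMem hpc hpJ hxJ hx
    simp [hnotJ, Prod.mk_le_mk]
  have hp_max' : (i + 1, j + 1) ∉ maxElems J := fun h => hpJ (mem_filter.1 h).1
  have hup_max : (i, j + 1) ∉ maxElems (insert (i + 1, j + 1) J) := by
    simp [hJ'.mem_maxElems_iff]
  have hleft_max : (i + 1, j) ∉ maxElems (insert (i + 1, j + 1) J) := by
    simp [hJ'.mem_maxElems_iff]
  have hp_min : (i + 1, j + 1) ∉ σ.minOutside (insert (i + 1, j + 1) J) := fun h =>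
    (mem_filter.1 h).2.1 (mem_insert_self _ _)
  have hright_min : (i + 1, j + 2) ∉ σ.minOutside J := fun h =>
    hpJ ((mem_filter.1 h).2.2 _ hpc (by simp [Prod.lt_iff]))
  have hdown_min : (i + 2, j + 1) ∉ σ.minOutside J := fun h =>
    hpJ ((mem_filter.1 h).2.2 _ hpc (by simp [Prod.lt_iff]))
  simp only [hp_max, hp_max', hup_max, hleft_max, hp_min, hp, hright_min, hdown_min, if_true,
    if_false] at hmax hmin
  have := hbal.up_right_contribution hJ hp
  have := hbal.left_down_contribution hJ hp
  unfold weightedJag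
  linarith

variable (σ) in
def firstBox (k : ℕ) : ℕ × ℕ := (k, σ.nu k + 1)

lemma minOutside_empty_subset : σ.minOutside ∅ ⊆ (range σ.a).image fun k => σ.firstBox (k + 1) := by
  intro x hx
  obtain ⟨k, l, rfl⟩ := σ.exists_eq_succ_of_mem_cells (mem_filter.1 hx).1
  obtain ⟨hxc, -, -, hleft⟩ := isIdeal_empty.mem_minOutside_iff.1 hx
  simp only [notMem_empty, imp_false, mem_cells] at hxc hleft
  simp only [firstBox, mem_image, mem_range, Prod.mk.injEq]
  exact ⟨k, by omega, rfl, by omega⟩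

lemma weight_firstBox_one :
    (if σ.firstBox 1 ∈ σ.minOutside ∅ then σ.weight (σ.firstBox 1) else 0) =
      σ.a * ((σ.b : ℤ) - σ.nu 1) := by
  have hc : (1, σ.nu 1 + 1) ∈ σ.cells :=
    σ.mem_cells.2 ⟨le_rfl, σ.ha, by omega, σ.nu_lt_lam 1 le_rfl σ.ha⟩
  have hmem : σ.firstBox 1 ∈ σ.minOutside ∅ :=
    (isIdeal_empty.mem_minOutside_iff (i := 0)).2 ⟨hc, notMem_empty _, by simp [mem_cells],
      by simp [mem_cells]⟩
  rw [if_pos hmem]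
  simp only [firstBox, weight]
  push_cast
  ring

lemma Balanced.weight_firstBox_add_two (hbal : σ.Balanced) {m : ℕ} (hm : m + 2 ≤ σ.a) :
    (if σ.firstBox (m + 2) ∈ σ.minOutside ∅ then σ.weight (σ.firstBox (m + 2)) else 0) =
      σ.a * ((σ.nu (m + 1) : ℤ) - σ.nu (m + 2)) := by
  have hnu := σ.nu_anti (m + 1) (m + 2) (by omega) (by omega) hm
  have hlam := σ.lam_anti (m + 1) (m + 2) (by omega) (by omega) hm
  have hrow := σ.nu_lt_lam (m + 2) (by omega) hm
  have hmem : σ.firstBox (m + 2) ∈ σ.minOutside ∅ ↔ σ.nu (m + 2) < σ.nu (m + 1) := by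
    rw [firstBox, isIdeal_empty.mem_minOutside_iff (i := m + 1)]
    simp only [notMem_empty, imp_false, not_false_eq_true, true_and, mem_cells, add_assoc,
      Nat.reduceAdd]
    omega
  split_ifs with h
  swap
  · simp [show σ.nu (m + 2) = σ.nu (m + 1) by have := hmem.not.1 h; omega]
  have hcorner : σ.IsNWCorner (m + 1, σ.nu (m + 1)) := by
    have hconn : σ.nu (m + 1) < σ.lam (m + 2) := hbal.1.nu_lt_lam_succ (by omega) (by omega)
    have := hmem.1 h
    simp only [IsNWCorner, mem_cells, add_assoc, Nat.reduceAdd]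
    omega
  have hdiag : (σ.b : ℤ) * (m + 1) + σ.a * σ.nu (m + 1) = σ.a * σ.b := by
    exact_mod_cast hbal.mul_add_mul_eq_of_isNWCorner hcorner
  simp only [firstBox, weight]
  push_cast
  linear_combination -hdiag

lemma Balanced.weightedJag_empty (hbal : σ.Balanced) : σ.weightedJag ∅ = σ.a * σ.b := by
  obtain ⟨n, hn⟩ : ∃ n, σ.a = n + 1 := ⟨σ.a - 1, by have := σ.ha; omega⟩
  rw [weightedJag, show maxElems (∅ : Finset (ℕ × ℕ)) = ∅ from rfl, sum_empty, zero_add,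
    ← inter_eq_right.2 minOutside_empty_subset, ← sum_ite_mem,
    sum_image (by intro x _ y _ h; simp only [firstBox, Prod.mk.injEq] at h; omega), hn,
    sum_range_succ', zero_add, weight_firstBox_one,
    sum_congr rfl fun m hm => hbal.weight_firstBox_add_two (by rw [mem_range] at hm; omega),
    ← mul_sum, sum_range_sub' (fun m => (σ.nu (m + 1) : ℤ)), ← hn, σ.nu_a]
  ring

lemma Balanced.weightedJag_eq (hbal : σ.Balanced) {I : Finset (ℕ × ℕ)} (hI : σ.IsIdeal I) :
    σ.weightedJag I = σ.a * σ.b := by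
  induction I using Finset.strongInduction with
  | H I ih =>
    rcases I.eq_empty_or_nonempty with rfl | hne
    · exact hbal.weightedJag_empty
    obtain ⟨p, hp⟩ := I.exists_maximal hne
    have hpmax : p ∈ maxElems I :=
      mem_filter.2 ⟨hp.1, fun q hq hpq => le_antisymm (hp.2 hq hpq) hpq⟩
    obtain ⟨i, j, rfl⟩ := σ.exists_eq_succ_of_mem_cells (hI.1 hp.1)
    rw [← insert_erase hp.1,
      hbal.weightedJag_insert (hI.erase hpmax) (mem_minOutside_erase hI hpmax)]
    exact ih _ (erase_ssubset hp.1) (hI.erase hpmax)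

lemma Balanced.antichainCard_mul {L : List (ℕ × ℕ)} {I : Finset (ℕ × ℕ)} (hbal : σ.Balanced)
    (hL : σ.IsLinExtList L) (hI : σ.IsIdeal I) :
    ((σ.a + σ.b) * antichainCard I : ℤ) = σ.a * σ.b + ∑ q ∈ maxElems I, σ.weight q -
      ∑ q ∈ maxElems (σ.rowmotion L I), σ.weight q := by
  have := hbal.weightedJag_eq hI
  rw [weightedJag, ← maxElems_rowmotion hL hI, sum_sub_distrib, sum_const, nsmul_eq_mul] at this
  rw [antichainCard, ← maxElems]
  linarith

end WeightedJag

end SkewShape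

/-- Corollary 3.13 for rowmotion: for a balanced skew shape `σ` with
height `a` and width `b`, the antichain cardinality statistic is `ab/(a+b)`-mesic with
respect to rowmotion on `J(P_σ)`: for every linear extension and every rowmotion-orbit
`O` (the set of iterates of an order ideal `I₀`), the average of `#A(I)` over `O` equals
`ab/(a+b)`. -/
theorem SkewShape.antichain_homomesy_rowmotion (σ : SkewShape) (hbal : σ.Balanced)
    (L : List (ℕ × ℕ)) (hL : σ.IsLinExtList L)
    (I₀ : Finset (ℕ × ℕ)) (hI₀ : σ.IsIdeal I₀)
    (O : Finset (Finset (ℕ × ℕ)))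
    (hO : ∀ J, J ∈ O ↔ ∃ k : ℕ, (σ.rowmotion L)^[k] I₀ = J) :
    (∑ J ∈ O, (SkewShape.antichainCard J : ℝ)) / (O.card : ℝ) =
      (σ.a : ℝ) * (σ.b : ℝ) / ((σ.a : ℝ) + (σ.b : ℝ)) := by
  have hideal : ∀ J ∈ O, σ.IsIdeal J := by
    intro J hJ
    obtain ⟨k, rfl⟩ := (hO J).1 hJ
    exact Set.MapsTo.iterate (s := {I | σ.IsIdeal I}) (fun _ => isIdeal_rowmotion L) k hI₀
  have hmaps : Set.MapsTo (σ.rowmotion L) O O := by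
    intro J hJ
    obtain ⟨k, rfl⟩ := (hO J).1 hJ
    exact (hO _).2 ⟨k + 1, Function.iterate_succ_apply' _ k I₀⟩
  have hinj : Set.InjOn (σ.rowmotion L) O := (injOn_rowmotion L).mono hideal
  have hsum : (σ.a + σ.b : ℤ) * ∑ J ∈ O, (antichainCard J : ℤ) = O.card * (σ.a * σ.b) := by
    rw [mul_sum, sum_congr rfl fun J hJ => hbal.antichainCard_mul hL (hideal J hJ),
      sum_sub_distrib, sum_add_distrib,
      sum_comp_eq_of_mapsTo_of_injOn hmaps hinj fun J => ∑ q ∈ maxElems J, σ.weight q]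
    simp
  have hsum' : ((σ.a : ℝ) + σ.b) * ∑ J ∈ O, (antichainCard J : ℝ) = O.card * (σ.a * σ.b) := by
    exact_mod_cast hsum
  have hO₀ : (O.card : ℝ) ≠ 0 := by exact_mod_cast (card_pos.2 ⟨I₀, (hO I₀).2 ⟨0, rfl⟩⟩).ne'
  have hab : (σ.a : ℝ) + σ.b ≠ 0 := by have := σ.ha; positivity
  rw [div_eq_div_iff hO₀ hab]
  linarith
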